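/- arXiv:1902.10651 — 2 statements merged into one kernel-verified Lean document; each statement's English description precedes it below -/
import Mathlib

section
/- The geodesic γ(t) = λ(t,θ) z₁ + λ(1−t,θ) z₀ has constant Lorentzian speed |θ|: for every t ∈ ℝ, ⟨γ'(t), γ'(t)⟩_L = θ². In particular the Lorentzian length of γ restricted to [0,1], i.e. the Lorentzian distance from z₀ to z₁ along γ, equals |θ|. -/
/-!
The null direction `ε = (0, …, 0, 1, 1)` is invisible to the Lorentzian form, so on `𝒯ⁿ` it reduces
to the Euclidean inner product of the unit parts. Since `γ' = λ'(t) z₁ − λ'(1−t) z₀`, the speed is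
`λ'(t)² + λ'(1−t)² − 2 λ'(t) λ'(1−t) cos θ`, which is `θ²` by the identity
`cos² A + cos² B − 2 cos A cos B cos (A + B) = sin² (A + B)` with `A + B = θ`.
-/

open RealInnerProductSpace

/-- The function `λ(x,θ)`: `sin(xθ)/sin(θ)` for `θ ≠ 0`, and `x` for `θ = 0`. -/
noncomputable def lam (x θ : ℝ) : ℝ := if θ = 0 then x else Real.sin (x * θ) / Real.sin θ

/-- The point `(u, cε) = (u₁, …, u_n, c, c) ∈ ℝ^{n+2}`. -/
noncomputable def emb {n : ℕ} (u : EuclideanSpace ℝ (Fin n)) (c : ℝ) : Fin (n + 2) → ℝ :=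
  fun i => if h : (i : ℕ) < n then u ⟨i, h⟩ else c

/-- The Lorentzian inner product `⟨v,w⟩_L = ∑_{i=1}^{n+1} vᵢwᵢ − v_{n+2}w_{n+2}` on `ℝ^{n+2}`. -/
noncomputable def lorentz {n : ℕ} (v w : Fin (n + 2) → ℝ) : ℝ :=
  (∑ i : Fin (n + 1), v i.castSucc * w i.castSucc) - v (Fin.last (n + 1)) * w (Fin.last (n + 1))

noncomputable def lamDeriv (x θ : ℝ) : ℝ :=
  if θ = 0 then 1 else Real.cos (x * θ) * θ / Real.sin θ

lemma hasDerivAt_lam (x θ : ℝ) : HasDerivAt (fun s => lam s θ) (lamDeriv x θ) x := by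
  by_cases h : θ = 0
  · simpa [lam, lamDeriv, h] using hasDerivAt_id' x
  · simpa [lam, lamDeriv, h] using ((hasDerivAt_id x).mul_const θ).sin.div_const (Real.sin θ)

lemma hasDerivAt_lam_smul_add_lam_one_sub_smul {E : Type*} [NormedAddCommGroup E]
    [NormedSpace ℝ E] (θ : ℝ) (v w : E) (t : ℝ) :
    HasDerivAt (fun s => lam s θ • v + lam (1 - s) θ • w)
      (lamDeriv t θ • v - lamDeriv (1 - t) θ • w) t := by
  have h := ((hasDerivAt_lam t θ).smul_const v).add
    (((hasDerivAt_lam (1 - t) θ).comp_const_sub 1 t).smul_const w)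
  rwa [neg_smul, ← sub_eq_add_neg] at h

lemma cos_sq_add_cos_sq_sub_mul_cos_add (A B : ℝ) :
    Real.cos A ^ 2 + Real.cos B ^ 2 - 2 * Real.cos A * Real.cos B * Real.cos (A + B)
      = Real.sin (A + B) ^ 2 := by
  rw [Real.cos_add, Real.sin_add]
  nlinarith [Real.sin_sq_add_cos_sq A, Real.sin_sq_add_cos_sq B]

lemma lamDeriv_sq_add_sq_sub_mul_cos {θ : ℝ} (hθ : θ = 0 ∨ Real.sin θ ≠ 0) (t : ℝ) :
    lamDeriv t θ ^ 2 + lamDeriv (1 - t) θ ^ 2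
      - 2 * lamDeriv t θ * lamDeriv (1 - t) θ * Real.cos θ = θ ^ 2 := by
  rcases hθ with rfl | hsin
  · norm_num [lamDeriv]
  · have hθ0 : θ ≠ 0 := by rintro rfl; simp at hsin
    have key := cos_sq_add_cos_sq_sub_mul_cos_add (t * θ) ((1 - t) * θ)
    rw [show t * θ + (1 - t) * θ = θ by ring] at key
    simp only [lamDeriv, if_neg hθ0]
    generalize Real.cos (t * θ) = A, Real.cos ((1 - t) * θ) = B at key ⊢
    field_simp
    linear_combination key

lemma lorentz_emb {n : ℕ} (u v : EuclideanSpace ℝ (Fin n)) (c d : ℝ) :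
    lorentz (emb u c) (emb v d) = ⟪u, v⟫ := by
  simp only [lorentz, emb, Fin.sum_univ_castSucc, PiLp.inner_apply, RCLike.inner_apply,
    conj_trivial, Fin.val_castSucc, Fin.val_last, dif_neg (lt_irrefl n)]
  simp [Fin.is_lt, mul_comm]

lemma lorentz_smul_sub_smul_self {n : ℕ} (a b : ℝ) (v w : Fin (n + 2) → ℝ) :
    lorentz (a • v - b • w) (a • v - b • w) =
      a ^ 2 * lorentz v v - 2 * a * b * lorentz v w + b ^ 2 * lorentz w w := by
  simp only [lorentz, Pi.sub_apply, Pi.smul_apply, smul_eq_mul]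
  rw [Finset.sum_congr rfl fun i _ => show (a * v i.castSucc - b * w i.castSucc) *
      (a * v i.castSucc - b * w i.castSucc) = a ^ 2 * (v i.castSucc * v i.castSucc)
        - 2 * a * b * (v i.castSucc * w i.castSucc) + b ^ 2 * (w i.castSucc * w i.castSucc) by ring,
    Finset.sum_add_distrib, Finset.sum_sub_distrib, ← Finset.mul_sum, ← Finset.mul_sum,
    ← Finset.mul_sum]
  ring

theorem geodesic_constant_speed_general {n : ℕ}
    (n₀ n₁ : EuclideanSpace ℝ (Fin n)) (c₀ c₁ : ℝ)
    (hn₀ : ‖n₀‖ = 1) (hn₁ : ‖n₁‖ = 1)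
    (θ : ℝ) (hθ : θ ∈ Set.Ico 0 Real.pi) (hcos : Real.cos θ = ⟪n₀, n₁⟫)
    (γ : ℝ → Fin (n + 2) → ℝ)
    (hγ : ∀ t, γ t = lam t θ • emb n₁ c₁ + lam (1 - t) θ • emb n₀ c₀) :
    (∀ t : ℝ, lorentz (deriv γ t) (deriv γ t) = θ ^ 2) ∧
    (∫ t in (0 : ℝ)..1, Real.sqrt |lorentz (deriv γ t) (deriv γ t)|) = |θ| := by
  have hderiv (t : ℝ) :
      deriv γ t = lamDeriv t θ • emb n₁ c₁ - lamDeriv (1 - t) θ • emb n₀ c₀ := by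
    rw [funext hγ]
    exact (hasDerivAt_lam_smul_add_lam_one_sub_smul θ _ _ t).deriv
  have hsin : θ = 0 ∨ Real.sin θ ≠ 0 :=
    hθ.1.eq_or_lt.imp Eq.symm fun hpos => (Real.sin_pos_of_pos_of_lt_pi hpos hθ.2).ne'
  have hspeed (t : ℝ) : lorentz (deriv γ t) (deriv γ t) = θ ^ 2 := by
    rw [hderiv, lorentz_smul_sub_smul_self, lorentz_emb, lorentz_emb, lorentz_emb,
      real_inner_self_eq_norm_sq, real_inner_self_eq_norm_sq, hn₀, hn₁, real_inner_comm, ← hcos]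
    linear_combination lamDeriv_sq_add_sq_sub_mul_cos hsin t
  refine ⟨hspeed, ?_⟩
  simp [hspeed, Real.sqrt_sq_eq_abs]

/-- The geodesic `γ(t) = λ(t,θ) z₁ + λ(1−t,θ) z₀` has constant Lorentzian speed `|θ|`:
`⟨γ'(t), γ'(t)⟩_L = θ²` for all `t`; in particular its Lorentzian length over `[0,1]`,
the Lorentzian distance from `z₀` to `z₁` along `γ`, equals `|θ|`. -/
theorem geodesic_constant_speed {n : ℕ} (hn : 1 ≤ n)
    (n₀ n₁ : EuclideanSpace ℝ (Fin n)) (c₀ c₁ : ℝ)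
    (hn₀ : ‖n₀‖ = 1) (hn₁ : ‖n₁‖ = 1) (hne : n₁ ≠ -n₀)
    (θ : ℝ) (hθ : θ ∈ Set.Ico 0 Real.pi) (hcos : Real.cos θ = ⟪n₀, n₁⟫)
    (γ : ℝ → Fin (n + 2) → ℝ)
    (hγ : ∀ t, γ t = lam t θ • emb n₁ c₁ + lam (1 - t) θ • emb n₀ c₀) :
    (∀ t : ℝ, lorentz (deriv γ t) (deriv γ t) = θ ^ 2) ∧
    (∫ t in (0 : ℝ)..1, Real.sqrt |lorentz (deriv γ t) (deriv γ t)|) = |θ| :=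
  geodesic_constant_speed_general n₀ n₁ c₀ c₁ hn₀ hn₁ θ hθ hcos γ hγ
end

section
/- Existence of Lorentzian parallel orthonormal frame families: let n₀, n₁ ∈ ℝⁿ be unit vectors with n₁ ≠ −n₀, let θ ∈ [0, π) satisfy cos θ = n₀·n₁, let c₀, c₁ ∈ ℝ, and set n_t = λ(t,θ) n₁ + λ(1−t,θ) n₀ and c_t = λ(t,θ) c₁ + λ(1−t,θ) c₀. Given any orthonormal basis e_{1,0}, …, e_{n−1,0} of the orthogonal complement of n₀ in ℝⁿ, there exist smooth maps e_i : ℝ → ℝⁿ, β_i : ℝ → ℝ, φ_i : ℝ → ℝ (i = 1,…,n−1) such that: e_i(0) = e_{i,0} for each i; for every t, the vectors e_1(t),…,e_{n−1}(t) are orthonormal and satisfy e_i(t)·n_t = 0; and for every i and t, the derivative of t ↦ (e_i(t), β_i(t) ε) equals φ_i(t)·(n_t, c_t ε) (so each (e_i(t), β_i(t)ε) is a Lorentzian parallel vector field along the Lorentzian geodesic γ(t) = (n_t, c_t ε)). -/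
open RealInnerProductSpace

theorem hasDerivAt_emb {n : ℕ} {u : ℝ → EuclideanSpace ℝ (Fin n)} {c : ℝ → ℝ}
    {u' : EuclideanSpace ℝ (Fin n)} {c' t : ℝ}
    (hu : HasDerivAt u u' t) (hc : HasDerivAt c c' t) :
    HasDerivAt (fun s => emb (u s) (c s)) (emb u' c') t := by
  rw [hasDerivAt_pi]
  intro j
  unfold emb
  by_cases h : (j : ℕ) < n
  · simp only [dif_pos h]
    have := (EuclideanSpace.proj (𝕜 := ℝ) (⟨j, h⟩ : Fin n)).hasFDerivAt.comp_hasDerivAt t hu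
    simpa [Function.comp_def] using this
  · simp only [dif_neg h]; exact hc

theorem emb_smul {n : ℕ} (a : ℝ) (u : EuclideanSpace ℝ (Fin n)) (c : ℝ) :
    emb (a • u) (a * c) = a • emb u c := by
  funext j
  by_cases h : (j : ℕ) < n <;> simp [emb, h]

/-- Existence of Lorentzian parallel orthonormal frame families (here `n = m + 2 ≥ 2`): given
unit vectors `n₀, n₁` with `n₁ ≠ −n₀`, `θ ∈ [0,π)` with `cos θ = n₀·n₁`,
`n_t = λ(t,θ) n₁ + λ(1−t,θ) n₀`, `c_t = λ(t,θ) c₁ + λ(1−t,θ) c₀`, and any orthonormal basis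
`e_{1,0}, …, e_{n−1,0}` of the orthogonal complement of `n₀`, there are smooth
`e_i, β_i, φ_i` with `e_i(0) = e_{i,0}`, the `e_i(t)` orthonormal and orthogonal to `n_t`, and
the derivative of `t ↦ (e_i(t), β_i(t)ε)` equal to `φ_i(t)·(n_t, c_t ε)` (so each
`(e_i(t), β_i(t)ε)` is Lorentzian parallel along the geodesic `γ(t) = (n_t, c_t ε)`). -/
theorem exists_lorentzian_parallel_frames {m : ℕ}
    (n₀ n₁ : EuclideanSpace ℝ (Fin (m + 2))) (c₀ c₁ : ℝ)
    (hn₀ : ‖n₀‖ = 1) (hn₁ : ‖n₁‖ = 1) (hne : n₁ ≠ -n₀)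
    (θ : ℝ) (hθ : θ ∈ Set.Ico 0 Real.pi) (hcos : Real.cos θ = ⟪n₀, n₁⟫)
    (nt : ℝ → EuclideanSpace ℝ (Fin (m + 2))) (ct : ℝ → ℝ)
    (hnt : ∀ t, nt t = lam t θ • n₁ + lam (1 - t) θ • n₀)
    (hct : ∀ t, ct t = lam t θ * c₁ + lam (1 - t) θ * c₀)
    (e0 : Fin (m + 1) → EuclideanSpace ℝ (Fin (m + 2)))
    (he0 : Orthonormal ℝ e0) (he0n : ∀ i, ⟪e0 i, n₀⟫ = 0) :
    ∃ (e : Fin (m + 1) → ℝ → EuclideanSpace ℝ (Fin (m + 2)))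
      (β φ : Fin (m + 1) → ℝ → ℝ),
      (∀ i, ContDiff ℝ (⊤ : ℕ∞) (e i)) ∧ (∀ i, ContDiff ℝ (⊤ : ℕ∞) (β i)) ∧ (∀ i, ContDiff ℝ (⊤ : ℕ∞) (φ i)) ∧
      (∀ i, e i 0 = e0 i) ∧
      (∀ t : ℝ, Orthonormal ℝ (fun i => e i t)) ∧
      (∀ i, ∀ t : ℝ, ⟪e i t, nt t⟫ = 0) ∧
      (∀ i, ∀ t : ℝ,
        deriv (fun s => emb (e i s) (β i s)) t = φ i t • emb (nt t) (ct t)) := by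
  by_cases hθ0 : θ = 0
  · -- degenerate case: n₁ = n₀ and nt is constant
    subst hθ0
    have h1 : n₁ = n₀ := by
      have : ⟪n₀, n₁⟫ = 1 := by rw [← hcos, Real.cos_zero]
      exact ((inner_eq_one_iff_of_norm_eq_one hn₀ hn₁).mp this).symm
    have hntc : ∀ t, nt t = n₀ := by
      intro t
      rw [hnt t, h1]
      simp only [lam, if_pos rfl]
      rw [← add_smul]
      norm_num
    refine ⟨fun i _ => e0 i, fun _ _ => 0, fun _ _ => 0, fun i => contDiff_const,
      fun i => contDiff_const, fun i => contDiff_const, fun i => rfl, fun t => he0,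
      fun i t => by rw [hntc t]; exact he0n i, fun i t => ?_⟩
    have : (fun s : ℝ => emb (e0 i) (0 : ℝ)) = fun _ => emb (e0 i) 0 := rfl
    rw [deriv_const, zero_smul]
  · -- main case
    obtain ⟨hθ0', hθπ⟩ := hθ
    have hθpos : 0 < θ := lt_of_le_of_ne hθ0' (Ne.symm hθ0)
    have hs : 0 < Real.sin θ := Real.sin_pos_of_pos_of_lt_pi hθpos hθπ
    have hsne : Real.sin θ ≠ 0 := ne_of_gt hs
    set v : EuclideanSpace ℝ (Fin (m + 2)) := (Real.sin θ)⁻¹ • (n₁ - Real.cos θ • n₀) with hv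
    have hn00 : ⟪n₀, n₀⟫ = 1 := by
      rw [real_inner_self_eq_norm_sq, hn₀]; norm_num
    have hn11 : ⟪n₁, n₁⟫ = 1 := by
      rw [real_inner_self_eq_norm_sq, hn₁]; norm_num
    have hn01 : ⟪n₀, n₁⟫ = Real.cos θ := hcos.symm
    have hn10 : ⟪n₁, n₀⟫ = Real.cos θ := by rw [real_inner_comm]; exact hn01
    have hn0v : ⟪n₀, v⟫ = 0 := by
      simp only [hv, inner_smul_right, inner_sub_right, inner_smul_right, hn00, hn01]
      ring
    have hvn0 : ⟪v, n₀⟫ = 0 := by rw [real_inner_comm]; exact hn0v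
    have hvv : ⟪v, v⟫ = 1 := by
      simp only [hv, inner_smul_right, inner_smul_left, inner_sub_right, inner_sub_left,
        inner_smul_right, hn00, hn01, hn10, hn11, RCLike.star_def, starRingEnd_apply,
        star_trivial]
      have := Real.sin_sq_add_cos_sq θ
      field_simp
      nlinarith [this]
    have hsv : Real.sin θ • v = n₁ - Real.cos θ • n₀ := by
      rw [hv, smul_smul, mul_inv_cancel₀ hsne, one_smul]
    have hn1' : n₁ = Real.cos θ • n₀ + Real.sin θ • v := by
      rw [hsv]; abel
    -- rewrite nt
    have hnt' : ∀ t, nt t = Real.cos (t * θ) • n₀ + Real.sin (t * θ) • v := by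
      intro t
      rw [hnt t, hn1']
      simp only [lam, if_neg hθ0]
      have h1t : (1 - t) * θ = θ - t * θ := by ring
      rw [h1t, Real.sin_sub]
      match_scalars <;> (field_simp; try ring)
    -- data
    set q : Fin (m + 1) → ℝ := fun i => ⟪e0 i, v⟫ with hq
    set p : Fin (m + 1) → EuclideanSpace ℝ (Fin (m + 2)) := fun i => e0 i - q i • v with hp
    have hpv : ∀ i, ⟪p i, v⟫ = 0 := by
      intro i
      simp only [hp, inner_sub_left, inner_smul_left, hvv, RCLike.star_def, starRingEnd_apply,
        star_trivial, hq]
      ring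
    have hvp : ∀ i, ⟪v, p i⟫ = 0 := fun i => by rw [real_inner_comm]; exact hpv i
    have hpn0 : ∀ i, ⟪p i, n₀⟫ = 0 := by
      intro i
      simp only [hp, inner_sub_left, inner_smul_left, hvn0, RCLike.star_def, starRingEnd_apply,
        star_trivial]
      rw [he0n i]; ring
    have hn0p : ∀ i, ⟪n₀, p i⟫ = 0 := fun i => by rw [real_inner_comm]; exact hpn0 i
    have hpp : ∀ i j, ⟪p i, p j⟫ = ⟪e0 i, e0 j⟫ - q i * q j := by
      intro i j
      simp only [hp, inner_sub_left, inner_sub_right, inner_smul_left, inner_smul_right, hvv,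
        RCLike.star_def, starRingEnd_apply, star_trivial]
      have : ⟪v, e0 j⟫ = q j := by rw [real_inner_comm]
      rw [this]
      simp only [hq]
      ring
    -- the frame
    refine ⟨fun i t => p i + (q i * Real.cos (t * θ)) • v - (q i * Real.sin (t * θ)) • n₀,
      fun i t => q i * (Real.cos (t * θ) * c₁ - Real.cos ((1 - t) * θ) * c₀) / Real.sin θ,
      fun i t => -(q i * θ), ?_, ?_, ?_, ?_, ?_, ?_, ?_⟩
    · intro i
      have hc : ContDiff ℝ (⊤ : ℕ∞) fun t : ℝ => Real.cos (t * θ) :=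
        Real.contDiff_cos.comp (contDiff_id.mul contDiff_const)
      have hsn : ContDiff ℝ (⊤ : ℕ∞) fun t : ℝ => Real.sin (t * θ) :=
        Real.contDiff_sin.comp (contDiff_id.mul contDiff_const)
      exact (contDiff_const.add (((contDiff_const.mul hc).smul contDiff_const))).sub
        ((contDiff_const.mul hsn).smul contDiff_const)
    · intro i
      have hc : ContDiff ℝ (⊤ : ℕ∞) fun t : ℝ => Real.cos (t * θ) :=
        Real.contDiff_cos.comp (contDiff_id.mul contDiff_const)
      have hc2 : ContDiff ℝ (⊤ : ℕ∞) fun t : ℝ => Real.cos ((1 - t) * θ) :=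
        Real.contDiff_cos.comp ((contDiff_const.sub contDiff_id).mul contDiff_const)
      exact (contDiff_const.mul ((hc.mul contDiff_const).sub (hc2.mul contDiff_const))).div_const _
    · intro i; exact contDiff_const
    · intro i
      simp [hp]
    · intro t
      rw [orthonormal_iff_ite]
      intro i j
      have expand : ⟪p i + (q i * Real.cos (t * θ)) • v - (q i * Real.sin (t * θ)) • n₀,
          p j + (q j * Real.cos (t * θ)) • v - (q j * Real.sin (t * θ)) • n₀⟫ = ⟪e0 i, e0 j⟫ := by
        simp only [inner_sub_left, inner_sub_right, inner_add_left, inner_add_right,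
          inner_smul_left, inner_smul_right, RCLike.star_def, starRingEnd_apply, star_trivial,
          hpv, hvp, hpn0, hn0p, hpp, hvv, hvn0, hn0v, hn00]
        linear_combination (q i * q j) * Real.sin_sq_add_cos_sq (t * θ)
      rw [expand]
      rw [orthonormal_iff_ite] at he0
      exact he0 i j
    · intro i t
      rw [hnt' t]
      simp only [inner_sub_left, inner_add_left, inner_add_right, inner_smul_left,
        inner_smul_right, RCLike.star_def, starRingEnd_apply, star_trivial,
        hpv, hpn0, hvv, hvn0, hn0v, hn00]
      ring
    · intro i t
      -- derivative computation
      have hcos' : HasDerivAt (fun s : ℝ => Real.cos (s * θ)) (-Real.sin (t * θ) * θ) t := by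
        have := (Real.hasDerivAt_cos (t * θ)).comp t ((hasDerivAt_id t).mul_const θ)
        simpa [Function.comp_def] using this
      have hsin' : HasDerivAt (fun s : ℝ => Real.sin (s * θ)) (Real.cos (t * θ) * θ) t := by
        have := (Real.hasDerivAt_sin (t * θ)).comp t ((hasDerivAt_id t).mul_const θ)
        simpa [Function.comp_def] using this
      have hcos2' : HasDerivAt (fun s : ℝ => Real.cos ((1 - s) * θ))
          (Real.sin ((1 - t) * θ) * θ) t := by
        have hi : HasDerivAt (fun s : ℝ => (1 - s) * θ) (-θ) t := by
          have := ((hasDerivAt_const t (1:ℝ)).sub (hasDerivAt_id t)).mul_const θ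
          simpa using this
        have := (Real.hasDerivAt_cos ((1 - t) * θ)).comp t hi
        simpa [Function.comp_def] using this
      have hE : HasDerivAt (fun s => p i + (q i * Real.cos (s * θ)) • v
            - (q i * Real.sin (s * θ)) • n₀)
          ((q i * (-Real.sin (t * θ) * θ)) • v - (q i * (Real.cos (t * θ) * θ)) • n₀) t := by
        have h1 := ((hcos'.const_mul (q i)).smul_const v)
        have h2 := ((hsin'.const_mul (q i)).smul_const n₀)
        have := ((hasDerivAt_const t (p i)).add h1).sub h2
        rw [zero_add] at this; exact this
      have hB : HasDerivAt (fun s => q i * (Real.cos (s * θ) * c₁ - Real.cos ((1 - s) * θ) * c₀)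
            / Real.sin θ)
          (q i * ((-Real.sin (t * θ) * θ) * c₁ - (Real.sin ((1 - t) * θ) * θ) * c₀)
            / Real.sin θ) t := by
        exact (((hcos'.mul_const c₁).sub (hcos2'.mul_const c₀)).const_mul (q i)).div_const _
      have H := hasDerivAt_emb hE hB
      rw [H.deriv]
      have hveq : (q i * (-Real.sin (t * θ) * θ)) • v - (q i * (Real.cos (t * θ) * θ)) • n₀
          = -(q i * θ) • nt t := by
        rw [hnt' t]
        match_scalars <;> ring
      have hceq : q i * ((-Real.sin (t * θ) * θ) * c₁ - (Real.sin ((1 - t) * θ) * θ) * c₀)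
            / Real.sin θ = -(q i * θ) * ct t := by
        rw [hct t]
        simp only [lam, if_neg hθ0]
        field_simp
        ring
      rw [hveq, hceq, emb_smul]
end
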